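/- For every k ≥ 2 there exist, in the Max version of the network creation game, (i) a strategy profile with edge price α > 0 and an agent who can strictly decrease her cost by adding k vertices to her strategy set simultaneously but cannot strictly decrease it by adding any j vertices with 1 ≤ j < k; (ii) a profile and an agent who can strictly decrease her cost by removing k vertices from her strategy set but not by removing any j < k of them; and (iii) a profile and an agent who can strictly decrease her cost by simultaneously exchanging k vertices of her strategy set for k other vertices but not by exchanging any j < k of them. -/

import Mathlib

open scoped Classical

/-- The simple graph induced by a strategy profile: `{u,v}` is an edge
iff `u ∈ S v` or `v ∈ S u`. -/
def indGraph {V : Type*} (S : V → Finset V) : SimpleGraph V where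
  Adj u v := u ≠ v ∧ (u ∈ S v ∨ v ∈ S u)
  symm := ⟨fun u v h => ⟨h.1.symm, h.2.symm⟩⟩
  loopless := ⟨fun u h => h.1 rfl⟩

/-- A strategy profile is valid if no agent buys an edge to herself,
i.e. `S v ⊆ V \ {v}` for every agent `v`. -/
def ValidProfile {V : Type*} (S : V → Finset V) : Prop := ∀ v, v ∉ S v

/-- Sum-version cost of agent `v`: `α·|S_v| + Σ_w d(v,w)` if the induced graph is
connected, and `∞` otherwise. -/
noncomputable def sumCost {V : Type*} [Fintype V] (α : ℝ) (S : V → Finset V) (v : V) : EReal :=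
  if (indGraph S).Connected then
    ((α * (S v).card + ∑ w : V, ((indGraph S).dist v w : ℝ) : ℝ) : EReal)
  else ⊤

/-- Maximum (shortest-path) distance from `v` to any vertex in the induced graph. -/
noncomputable def maxDist {V : Type*} [Fintype V] (S : V → Finset V) (v : V) : ℕ :=
  Finset.univ.sup fun w : V => (indGraph S).dist v w

/-- Max-version cost of agent `v`: `α·|S_v| + max_w d(v,w)` if the induced graph is
connected, and `∞` otherwise. -/
noncomputable def maxCost {V : Type*} [Fintype V] (α : ℝ) (S : V → Finset V) (v : V) : EReal :=
  if (indGraph S).Connected then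
    ((α * (S v).card + (maxDist S v : ℝ) : ℝ) : EReal)
  else ⊤

/-- Pure Nash equilibrium w.r.t. an abstract cost function: no agent can strictly
decrease her cost by unilaterally replacing her strategy with any other valid set. -/
def isNE {V : Type*} [DecidableEq V] (cost : (V → Finset V) → V → EReal)
    (S : V → Finset V) : Prop :=
  ∀ (v : V) (T : Finset V), v ∉ T →
    ¬ cost (Function.update S v T) v < cost S v

/-- Greedy equilibrium: no agent can strictly decrease her cost by adding a single
vertex to her strategy set, removing a single vertex, or exchanging a single vertex
of her set for another vertex. -/
def isGE {V : Type*} [DecidableEq V] (cost : (V → Finset V) → V → EReal)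
    (S : V → Finset V) : Prop :=
  (∀ v x : V, x ≠ v → x ∉ S v →
    ¬ cost (Function.update S v (insert x (S v))) v < cost S v) ∧
  (∀ v x : V, x ∈ S v →
    ¬ cost (Function.update S v ((S v).erase x)) v < cost S v) ∧
  (∀ v x y : V, x ∈ S v → y ≠ v → y ∉ S v →
    ¬ cost (Function.update S v (insert y ((S v).erase x))) v < cost S v)

/-- `β`-approximate Nash equilibrium: every agent's current cost is at most `β` times
the cost of each (hence of the best) unilateral deviation. -/
def isApproxNE {V : Type*} [DecidableEq V] (β : ℝ)
    (cost : (V → Finset V) → V → EReal) (S : V → Finset V) : Prop :=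
  ∀ (v : V) (T : Finset V), v ∉ T →
    cost S v ≤ (β : EReal) * cost (Function.update S v T) v

/-- Diameter of a graph on a finite vertex set. -/
noncomputable def gdiam {V : Type*} [Fintype V] (G : SimpleGraph V) : ℕ :=
  Finset.univ.sup fun p : V × V => G.dist p.1 p.2

/-- `G` is a star: there is a center adjacent to exactly the other vertices,
and there are no other edges. -/
def IsStar {V : Type*} (G : SimpleGraph V) : Prop :=
  ∃ c : V, ∀ a b : V, G.Adj a b ↔ (a = c ∧ b ≠ c) ∨ (b = c ∧ a ≠ c)

/-- A Cheap Star: a Max greedy equilibrium whose induced graph is a star on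
`n ≥ 4` vertices with `α < 1/(n-2)`. -/
def CheapStar {V : Type*} [Fintype V] [DecidableEq V] (α : ℝ) (S : V → Finset V) : Prop :=
  isGE (maxCost α) S ∧ IsStar (indGraph S) ∧ 4 ≤ Fintype.card V ∧
    α < 1 / ((Fintype.card V : ℝ) - 2)

/-- A Badly Connected Tree: a Max greedy equilibrium whose induced graph is a tree and
in which some agent can strictly decrease her cost by simultaneously exchanging `k > 1`
vertices of her strategy set for `k` other vertices (a multi-swap). -/
def BadlyConnectedTree {V : Type*} [Fintype V] [DecidableEq V] (α : ℝ)
    (S : V → Finset V) : Prop :=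
  isGE (maxCost α) S ∧ (indGraph S).IsTree ∧
  ∃ (u : V) (X Y : Finset V), X ⊆ S u ∧ (∀ y ∈ Y, y ≠ u ∧ y ∉ S u) ∧
    1 < X.card ∧ X.card = Y.card ∧
    maxCost α (Function.update S u ((S u \ X) ∪ Y)) u < maxCost α S u

/-- A Cheap Network: a profile that is a Max greedy equilibrium for every
edge price `α'` with `0 < α' ≤ α`. -/
def CheapNetwork {V : Type*} [Fintype V] [DecidableEq V] (α : ℝ)
    (S : V → Finset V) : Prop :=
  0 < α ∧ ∀ α' : ℝ, 0 < α' → α' ≤ α → isGE (maxCost α') S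


section AuxNCG

open SimpleGraph

variable {V : Type*}

private lemma indGraph_adj' (S : V → Finset V) (a b : V) :
    (indGraph S).Adj a b ↔ a ≠ b ∧ (a ∈ S b ∨ b ∈ S a) := Iff.rfl

private lemma indGraph_update_adj [DecidableEq V] (S : V → Finset V) (v : V) (T : Finset V)
    (a b : V) :
    (indGraph (Function.update S v T)).Adj a b ↔
      a ≠ b ∧ ((b = v ∧ a ∈ T) ∨ (a = v ∧ b ∈ T) ∨ (b ≠ v ∧ a ∈ S b) ∨ (a ≠ v ∧ b ∈ S a)) := by
  rw [indGraph_adj']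
  by_cases hb : b = v <;> by_cases ha : a = v <;>
    simp [Function.update_apply, ha, hb] <;> tauto

private lemma aux_dist_le_one {G : SimpleGraph V} {a b : V} (h : G.Adj a b) :
    G.dist a b ≤ 1 := by
  simpa using SimpleGraph.dist_le (SimpleGraph.Walk.cons h SimpleGraph.Walk.nil)

private lemma aux_dist_le_two {G : SimpleGraph V} {a b c : V} (h1 : G.Adj a b)
    (h2 : G.Adj b c) : G.dist a c ≤ 2 := by
  simpa using SimpleGraph.dist_le
    (SimpleGraph.Walk.cons h1 (SimpleGraph.Walk.cons h2 SimpleGraph.Walk.nil))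

private lemma aux_dist_le_three {G : SimpleGraph V} {a b c d : V} (h1 : G.Adj a b)
    (h2 : G.Adj b c) (h3 : G.Adj c d) : G.dist a d ≤ 3 := by
  simpa using SimpleGraph.dist_le
    (SimpleGraph.Walk.cons h1 (SimpleGraph.Walk.cons h2
      (SimpleGraph.Walk.cons h3 SimpleGraph.Walk.nil)))

private lemma aux_two_le_dist {G : SimpleGraph V} {a b : V} (hr : G.Reachable a b)
    (hne : a ≠ b) (hna : ¬ G.Adj a b) : 2 ≤ G.dist a b := by
  have h0 := hr.pos_dist_of_ne hne
  by_contra h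
  push_neg at h
  have h1 : G.dist a b = 1 := by omega
  exact hna (SimpleGraph.dist_eq_one_iff_adj.mp h1)

private lemma aux_three_le_dist {G : SimpleGraph V} {a b : V} (hr : G.Reachable a b)
    (hne : a ≠ b) (hna : ¬ G.Adj a b) (hmid : ∀ c, G.Adj a c → ¬ G.Adj c b) :
    3 ≤ G.dist a b := by
  have h2 := aux_two_le_dist hr hne hna
  by_contra h
  push_neg at h
  have hd : G.dist a b = 2 := by omega
  obtain ⟨p, hp⟩ := hr.exists_walk_length_eq_dist
  rw [hd] at hp
  cases p with
  | nil => simp at hp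
  | cons h1 q =>
    cases q with
    | nil => simp at hp
    | cons hq r =>
      cases r with
      | nil => exact hmid _ h1 hq
      | cons h3 s => simp [SimpleGraph.Walk.length_cons] at hp

private lemma aux_connected {G : SimpleGraph V} (v : V) (h : ∀ w, G.Reachable v w) :
    G.Connected := (SimpleGraph.connected_iff G).mpr ⟨fun a b => (h a).symm.trans (h b), ⟨v⟩⟩

private lemma aux_maxDist_le [Fintype V] {S : V → Finset V} {v : V} {d : ℕ}
    (h : ∀ w, (indGraph S).dist v w ≤ d) : maxDist S v ≤ d :=
  Finset.sup_le fun w _ => h w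

private lemma aux_le_maxDist [Fintype V] {S : V → Finset V} {v : V} {d : ℕ} (w : V)
    (h : d ≤ (indGraph S).dist v w) : d ≤ maxDist S v :=
  le_trans h (Finset.le_sup (Finset.mem_univ w))

private lemma aux_maxDist_eq_one [Fintype V] {S : V → Finset V} {v : V}
    (h : ∀ w, w ≠ v → (indGraph S).Adj v w) (hw : ∃ w : V, w ≠ v) :
    maxDist S v = 1 := by
  obtain ⟨w0, hw0⟩ := hw
  refine le_antisymm (aux_maxDist_le fun w => ?_) (aux_le_maxDist w0 ?_)
  · by_cases hwv : w = v
    · subst hwv; simp [SimpleGraph.dist_self]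
    · exact aux_dist_le_one (h w hwv)
  · exact le_of_eq (SimpleGraph.dist_eq_one_iff_adj.mpr (h w0 hw0)).symm

private lemma aux_connected_of_dominating [Fintype V] {S : V → Finset V} {v : V}
    (h : ∀ w, w ≠ v → (indGraph S).Adj v w) : (indGraph S).Connected := by
  refine aux_connected v fun w => ?_
  by_cases hwv : w = v
  · subst hwv; exact SimpleGraph.Reachable.refl _
  · exact (h w hwv).reachable

private lemma maxCost_eq_of_conn [Fintype V] {S : V → Finset V} {α : ℝ} {v : V}
    (h : (indGraph S).Connected) :
    maxCost α S v = ((α * ((S v).card : ℝ) + (maxDist S v : ℝ) : ℝ) : EReal) := if_pos h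

private lemma aux_not_lt_cost [Fintype V] {α : ℝ} {S S' : V → Finset V} {v : V} {r : ℝ}
    (hold : maxCost α S v = ((r : ℝ) : EReal))
    (h : (indGraph S').Connected → r ≤ α * ((S' v).card : ℝ) + (maxDist S' v : ℝ)) :
    ¬ maxCost α S' v < maxCost α S v := by
  rw [hold, maxCost]
  split_ifs with hc
  · exact not_lt.mpr (EReal.coe_le_coe_iff.mpr (h hc))
  · exact not_top_lt

private lemma aux_lt_cost [Fintype V] {α : ℝ} {S S' : V → Finset V} {v : V}
    (hc' : (indGraph S').Connected) (hc : (indGraph S).Connected)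
    (h : α * ((S' v).card : ℝ) + (maxDist S' v : ℝ) <
      α * ((S v).card : ℝ) + (maxDist S v : ℝ)) :
    maxCost α S' v < maxCost α S v := by
  rw [maxCost_eq_of_conn hc', maxCost_eq_of_conn hc]
  exact EReal.coe_lt_coe_iff.mpr h

private lemma aux_exists_not_mem {α : Type*} {s t : Finset α} (h : s.card < t.card) :
    ∃ e ∈ t, e ∉ s := by
  by_contra hc
  push_neg at hc
  exact absurd (Finset.card_le_card hc) (by omega)

end AuxNCG

/-! ### Scenario profiles -/

/-- Scenario (i): star with center `1`; agent `0` owns the edge to `1` while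
vertex `1` owns the edges to the remaining `m+2` leaves. -/
private def sProfA (m : ℕ) : Fin (m+4) → Finset (Fin (m+4)) := fun w =>
  if w.val = 0 then {⟨1, by omega⟩}
  else if w.val = 1 then Finset.Icc ⟨2, by omega⟩ ⟨m+3, by omega⟩
  else ∅

/-- Scenario (ii): `0` owns edges to all of `3..m+4`; `1` owns edges to `0` and `2`;
`2` owns edges to all of `3..m+4`. -/
private def sProfB (m : ℕ) : Fin (m+5) → Finset (Fin (m+5)) := fun w =>
  if w.val = 0 then Finset.Icc ⟨3, by omega⟩ ⟨m+4, by omega⟩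
  else if w.val = 1 then {⟨0, by omega⟩, ⟨2, by omega⟩}
  else if w.val = 2 then Finset.Icc ⟨3, by omega⟩ ⟨m+4, by omega⟩
  else ∅

/-- Scenario (iii): `0` owns edges to `X = 1..m+2`; every member of `X` owns edges to
`0` and to all of `F = m+3..2m+4`. -/
private def sProfC (m : ℕ) : Fin (2*m+5) → Finset (Fin (2*m+5)) := fun w =>
  if w.val = 0 then Finset.Icc ⟨1, by omega⟩ ⟨m+2, by omega⟩
  else if w.val ≤ m+2 then
    insert ⟨0, by omega⟩ (Finset.Icc ⟨m+3, by omega⟩ ⟨2*m+4, by omega⟩)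
  else ∅

private lemma scenA (m : ℕ) :
    ∃ (n : ℕ) (α : ℝ) (S : Fin n → Finset (Fin n)) (v : Fin n) (W : Finset (Fin n)),
      2 ≤ n ∧ 0 < α ∧ ValidProfile S ∧
      W.card = m + 2 ∧ (∀ x ∈ W, x ≠ v ∧ x ∉ S v) ∧
      maxCost α (Function.update S v (S v ∪ W)) v < maxCost α S v ∧
      (∀ W' : Finset (Fin n), (∀ x ∈ W', x ≠ v ∧ x ∉ S v) →
        1 ≤ W'.card → W'.card < m + 2 →
        ¬ maxCost α (Function.update S v (S v ∪ W')) v < maxCost α S v) := by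
  classical
  set α : ℝ := 1 / (2 * (m:ℝ) + 4) with hαdef
  have hα : (0:ℝ) < α := by rw [hαdef]; positivity
  set v : Fin (m+4) := ⟨0, by omega⟩ with hv
  set u : Fin (m+4) := ⟨1, by omega⟩ with hu
  set F : Finset (Fin (m+4)) := Finset.Icc ⟨2, by omega⟩ ⟨m+3, by omega⟩ with hF
  have hmemF : ∀ x : Fin (m+4), x ∈ F ↔ 2 ≤ x.val := by
    intro x
    have := x.isLt
    rw [hF, Finset.mem_Icc, Fin.le_def, Fin.le_def]
    simp only [hu, hv]
    omega
  have hFcard : F.card = m + 2 := by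
    rw [hF, Fin.card_Icc]
    simp only [Fin.val_mk]
    omega
  have hSv : sProfA m v = {u} := rfl
  have hSu : sProfA m u = F := rfl
  have hSf : ∀ w : Fin (m+4), 2 ≤ w.val → sProfA m w = ∅ := by
    intro w hw
    simp only [sProfA]
    rw [if_neg (by omega), if_neg (by omega)]
  have hvu : v ≠ u := by
    rw [hv, hu, Fin.ne_iff_vne]
    simp only [Fin.val_mk]
    omega
  have hadj_vu : (indGraph (sProfA m)).Adj v u :=
    ⟨hvu, Or.inr (by rw [hSv]; exact Finset.mem_singleton_self u)⟩
  have hadj_uw : ∀ w : Fin (m+4), 2 ≤ w.val → (indGraph (sProfA m)).Adj u w := by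
    intro w hw
    refine ⟨?_, Or.inr (by rw [hSu]; exact (hmemF w).mpr hw)⟩
    rw [hu, Fin.ne_iff_vne]
    simp only [Fin.val_mk]
    omega
  have hreach : ∀ w, (indGraph (sProfA m)).Reachable v w := by
    intro w
    by_cases h0 : w.val = 0
    · have hwv : w = v := by rw [hv, Fin.ext_iff]; simp only [Fin.val_mk]; omega
      rw [hwv]
    · by_cases h1 : w.val = 1
      · have hwu : w = u := by rw [hu, Fin.ext_iff]; simp only [Fin.val_mk]; omega
        rw [hwu]
        exact hadj_vu.reachable
      · exact (hadj_vu.reachable).trans (hadj_uw w (by omega)).reachable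
  have hconn : (indGraph (sProfA m)).Connected := aux_connected v hreach
  have hnadj : ∀ w : Fin (m+4), 2 ≤ w.val → ¬ (indGraph (sProfA m)).Adj v w := by
    intro w hw hadj
    rcases hadj.2 with h | h
    · rw [hSf w hw] at h
      exact absurd h (Finset.notMem_empty v)
    · rw [hSv, Finset.mem_singleton] at h
      have h2 : (w:ℕ) = 1 := by rw [h, hu]
      omega
  have hf2 : ((⟨2, by omega⟩ : Fin (m+4)) : Fin (m+4)).val = 2 := rfl
  have hMD : maxDist (sProfA m) v = 2 := by
    refine le_antisymm (aux_maxDist_le fun w => ?_)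
      (aux_le_maxDist (⟨2, by omega⟩ : Fin (m+4)) ?_)
    · by_cases h0 : w.val = 0
      · have hwv : w = v := by rw [hv, Fin.ext_iff]; simp only [Fin.val_mk]; omega
        rw [hwv, SimpleGraph.dist_self]
        omega
      · by_cases h1 : w.val = 1
        · have hwu : w = u := by rw [hu, Fin.ext_iff]; simp only [Fin.val_mk]; omega
          rw [hwu]
          exact le_trans (aux_dist_le_one hadj_vu) (by omega)
        · exact aux_dist_le_two hadj_vu (hadj_uw w (by omega))
    · refine aux_two_le_dist (hreach _) ?_ (hnadj _ (by simp [Fin.val_mk]))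
      rw [hv, Fin.ne_iff_vne]
      simp only [Fin.val_mk]
      omega
  have hcardSv : (sProfA m v).card = 1 := by rw [hSv, Finset.card_singleton]
  have hcost_old : maxCost α (sProfA m) v = ((α * 1 + 2 : ℝ) : EReal) := by
    rw [maxCost_eq_of_conn hconn, hMD, hcardSv]
    norm_num
  refine ⟨m+4, α, sProfA m, v, F, by omega, hα, ?_, by rw [hFcard], ?_, ?_, ?_⟩
  · -- ValidProfile
    intro w
    by_cases h0 : w.val = 0
    · have hwv : w = v := by rw [hv, Fin.ext_iff]; simp only [Fin.val_mk]; omega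
      rw [hwv, hSv, Finset.mem_singleton]
      exact hvu
    · by_cases h1 : w.val = 1
      · have hwu : w = u := by rw [hu, Fin.ext_iff]; simp only [Fin.val_mk]; omega
        rw [hwu, hSu]
        intro hmem
        have := (hmemF u).mp hmem
        rw [hu, Fin.val_mk] at this
        omega
      · rw [hSf w (by omega)]
        exact Finset.notMem_empty w
  · -- properties of W = F
    intro x hx
    have h2 := (hmemF x).mp hx
    constructor
    · rw [hv, Fin.ne_iff_vne]; simp only [Fin.val_mk]; omega
    · rw [hSv, Finset.mem_singleton]
      intro h
      have h3 : (x:ℕ) = 1 := by rw [h, hu]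
      omega
  · -- improvement by buying all of F
    have hdomin : ∀ w, w ≠ v →
        (indGraph (Function.update (sProfA m) v (sProfA m v ∪ F))).Adj v w := by
      intro w hw
      rw [indGraph_update_adj]
      refine ⟨Ne.symm hw, Or.inr (Or.inl ⟨rfl, ?_⟩)⟩
      by_cases h1 : w.val = 1
      · have hwu : w = u := by rw [hu, Fin.ext_iff]; simp only [Fin.val_mk]; omega
        rw [hwu]
        exact Finset.mem_union_left _ (by rw [hSv]; exact Finset.mem_singleton_self u)
      · have h0 : w.val ≠ 0 := by
          intro h0
          exact hw (by rw [hv, Fin.ext_iff]; simp only [Fin.val_mk]; omega)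
        exact Finset.mem_union_right _ ((hmemF w).mpr (by omega))
    have hconn' := aux_connected_of_dominating hdomin
    have hMD' := aux_maxDist_eq_one hdomin ⟨u, Ne.symm hvu⟩
    have hdisjuF : Disjoint {u} F := by
      rw [Finset.disjoint_singleton_left]
      intro hmem
      have h1 := (hmemF u).mp hmem
      rw [hu, Fin.val_mk] at h1
      omega
    have hTcard : (sProfA m v ∪ F).card = m + 3 := by
      rw [hSv, Finset.card_union_of_disjoint hdisjuF, Finset.card_singleton, hFcard]
      omega
    apply aux_lt_cost hconn' hconn
    rw [hMD', hMD, Function.update_self, hTcard, hcardSv]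
    have hm : (0:ℝ) < 2 * (m:ℝ) + 4 := by positivity
    have key : α * ((m:ℝ) + 2) < 1 := by
      rw [hαdef, div_mul_eq_mul_div, div_lt_one hm]
      nlinarith
    have expand : α * (((m:ℕ) + 3 : ℕ) : ℝ) = α * ((m:ℝ) + 2) + α := by
      push_cast
      ring
    push_cast
    push_cast at expand key
    nlinarith [key, hα]
  · -- no improvement by buying fewer
    intro W' hW' h1 h2
    have hWsub : W' ⊆ F := by
      intro x hx
      obtain ⟨hxv, hxu⟩ := hW' x hx
      rw [hSv, Finset.mem_singleton] at hxu
      refine (hmemF x).mpr ?_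
      rcases Nat.lt_or_ge x.val 2 with hlt | hge
      · exfalso
        by_cases h : x.val = 0
        · exact hxv (by rw [hv, Fin.ext_iff]; simp only [Fin.val_mk]; omega)
        · exact hxu (by rw [hu, Fin.ext_iff]; simp only [Fin.val_mk]; omega)
      · exact hge
    obtain ⟨f, hfF, hfW⟩ := aux_exists_not_mem (s := W') (t := F) (by omega)
    have hf2' := (hmemF f).mp hfF
    apply aux_not_lt_cost hcost_old
    intro hc
    have hdisjuW : Disjoint {u} W' := by
      rw [Finset.disjoint_singleton_left]
      intro hmem
      obtain ⟨-, hxu⟩ := hW' u hmem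
      rw [hSv] at hxu
      exact hxu (Finset.mem_singleton_self u)
    have hcard2 : ((Function.update (sProfA m) v (sProfA m v ∪ W')) v).card
        = 1 + W'.card := by
      rw [Function.update_self, hSv, Finset.card_union_of_disjoint hdisjuW,
        Finset.card_singleton]
    have hfv : v ≠ f := by
      rw [hv, Fin.ne_iff_vne]
      simp only [Fin.val_mk]
      omega
    have hnadj' : ¬ (indGraph (Function.update (sProfA m) v (sProfA m v ∪ W'))).Adj v f := by
      rw [indGraph_update_adj]
      rintro ⟨hne, ⟨hfv', -⟩ | ⟨-, hmem⟩ | ⟨-, hmem⟩ | ⟨hvv, -⟩⟩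
      · exact hfv hfv'.symm
      · rcases Finset.mem_union.mp hmem with h | h
        · rw [hSv, Finset.mem_singleton] at h
          have h2 : (f:ℕ) = 1 := by rw [h, hu]
          omega
        · exact hfW h
      · rw [hSf f hf2'] at hmem
        exact Finset.notMem_empty v hmem
      · exact hvv rfl
    have hd2 : 2 ≤ maxDist (Function.update (sProfA m) v (sProfA m v ∪ W')) v :=
      aux_le_maxDist f (aux_two_le_dist (hc.preconnected v f) hfv hnadj')
    rw [hcard2]
    have hd2' : (2:ℝ) ≤ (maxDist (Function.update (sProfA m) v (sProfA m v ∪ W')) v : ℝ) := by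
      exact_mod_cast hd2
    have hαj : 0 ≤ α * (W'.card : ℝ) := mul_nonneg hα.le (Nat.cast_nonneg _)
    push_cast
    nlinarith [hαj, hd2']

set_option maxHeartbeats 2000000 in
private lemma scenB (m : ℕ) :
    ∃ (n : ℕ) (α : ℝ) (S : Fin n → Finset (Fin n)) (v : Fin n) (D : Finset (Fin n)),
      2 ≤ n ∧ 0 < α ∧ ValidProfile S ∧
      D ⊆ S v ∧ D.card = m + 2 ∧
      maxCost α (Function.update S v (S v \ D)) v < maxCost α S v ∧
      (∀ D' : Finset (Fin n), D' ⊆ S v → 1 ≤ D'.card → D'.card < m + 2 →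
        ¬ maxCost α (Function.update S v (S v \ D')) v < maxCost α S v) := by
  classical
  set α : ℝ := 2 / (2 * (m:ℝ) + 3) with hαdef
  have hden : (0:ℝ) < 2 * (m:ℝ) + 3 := by positivity
  have hα : (0:ℝ) < α := by rw [hαdef]; positivity
  set v : Fin (m+5) := ⟨0, by omega⟩ with hv
  set u : Fin (m+5) := ⟨1, by omega⟩ with hu
  set y : Fin (m+5) := ⟨2, by omega⟩ with hy
  set X : Finset (Fin (m+5)) := Finset.Icc ⟨3, by omega⟩ ⟨m+4, by omega⟩ with hX
  have hvval : (v:ℕ) = 0 := rfl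
  have huval : (u:ℕ) = 1 := rfl
  have hyval : (y:ℕ) = 2 := rfl
  have hmemX : ∀ x : Fin (m+5), x ∈ X ↔ 3 ≤ x.val := by
    intro x
    have := x.isLt
    rw [hX, Finset.mem_Icc, Fin.le_def, Fin.le_def]
    simp only [Fin.val_mk]
    omega
  have hXcard : X.card = m + 2 := by
    rw [hX, Fin.card_Icc]
    simp only [Fin.val_mk]
    omega
  have hSv : sProfB m v = X := rfl
  have hSu : sProfB m u = {v, y} := rfl
  have hSy : sProfB m y = X := rfl
  have hSx : ∀ w : Fin (m+5), 3 ≤ w.val → sProfB m w = ∅ := by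
    intro w hw
    simp only [sProfB]
    rw [if_neg (by omega), if_neg (by omega), if_neg (by omega)]
  have hvu : v ≠ u := by rw [Fin.ne_iff_vne, hvval, huval]; omega
  have hvy : v ≠ y := by rw [Fin.ne_iff_vne, hvval, hyval]; omega
  have huy : u ≠ y := by rw [Fin.ne_iff_vne, huval, hyval]; omega
  -- a helper: who can own an edge to v
  have hvmem : ∀ c : Fin (m+5), v ∈ sProfB m c → c = u := by
    intro c hc
    by_cases h0 : c.val = 0
    · have hcv : c = v := by rw [Fin.ext_iff, hvval]; omega
      rw [hcv, hSv, hmemX, hvval] at hc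
      omega
    · by_cases h1 : c.val = 1
      · exact Fin.ext (by rw [huval]; omega)
      · by_cases h2 : c.val = 2
        · have hcy : c = y := by rw [Fin.ext_iff, hyval]; omega
          rw [hcy, hSy, hmemX, hvval] at hc
          omega
        · rw [hSx c (by omega)] at hc
          exact absurd hc (Finset.notMem_empty v)
  have hadj_vu : (indGraph (sProfB m)).Adj v u :=
    ⟨hvu, Or.inl (by rw [hSu]; exact Finset.mem_insert_self v {y})⟩
  have hadj_uy : (indGraph (sProfB m)).Adj u y :=
    ⟨huy, Or.inr (by rw [hSu]; exact Finset.mem_insert_of_mem (Finset.mem_singleton_self y))⟩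
  have hadj_vx : ∀ w : Fin (m+5), 3 ≤ w.val → (indGraph (sProfB m)).Adj v w := by
    intro w hw
    exact ⟨by rw [Fin.ne_iff_vne, hvval]; omega, Or.inr (by rw [hSv]; exact (hmemX w).mpr hw)⟩
  have hadj_yx : ∀ w : Fin (m+5), 3 ≤ w.val → (indGraph (sProfB m)).Adj y w := by
    intro w hw
    exact ⟨by rw [Fin.ne_iff_vne, hyval]; omega, Or.inr (by rw [hSy]; exact (hmemX w).mpr hw)⟩
  have hnadj_vy : ¬ (indGraph (sProfB m)).Adj v y := by
    rintro ⟨-, h | h⟩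
    · rw [hSy, hmemX, hvval] at h
      omega
    · rw [hSv, hmemX, hyval] at h
      omega
  have hreach : ∀ w, (indGraph (sProfB m)).Reachable v w := by
    intro w
    by_cases h0 : w.val = 0
    · have hwv : w = v := by rw [Fin.ext_iff, hvval]; omega
      rw [hwv]
    · by_cases h1 : w.val = 1
      · have hwu : w = u := by rw [Fin.ext_iff, huval]; omega
        rw [hwu]; exact hadj_vu.reachable
      · by_cases h2 : w.val = 2
        · have hwy : w = y := by rw [Fin.ext_iff, hyval]; omega
          rw [hwy]; exact (hadj_vu.reachable).trans hadj_uy.reachable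
        · exact (hadj_vx w (by omega)).reachable
  have hconn : (indGraph (sProfB m)).Connected := aux_connected v hreach
  have hMD : maxDist (sProfB m) v = 2 := by
    refine le_antisymm (aux_maxDist_le fun w => ?_) (aux_le_maxDist y ?_)
    · by_cases h0 : w.val = 0
      · have hwv : w = v := by rw [Fin.ext_iff, hvval]; omega
        rw [hwv, SimpleGraph.dist_self]; omega
      · by_cases h1 : w.val = 1
        · have hwu : w = u := by rw [Fin.ext_iff, huval]; omega
          rw [hwu]
          exact le_trans (aux_dist_le_one hadj_vu) (by omega)
        · by_cases h2 : w.val = 2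
          · have hwy : w = y := by rw [Fin.ext_iff, hyval]; omega
            rw [hwy]
            exact aux_dist_le_two hadj_vu hadj_uy
          · exact le_trans (aux_dist_le_one (hadj_vx w (by omega))) (by omega)
    · exact aux_two_le_dist (hreach y) hvy hnadj_vy
  have hcost_old : maxCost α (sProfB m) v
      = ((α * ((m:ℝ) + 2) + 2 : ℝ) : EReal) := by
    rw [maxCost_eq_of_conn hconn, hMD, hSv, hXcard]
    norm_num
  refine ⟨m+5, α, sProfB m, v, X, by omega, hα, ?_, by rw [hSv], by rw [hXcard], ?_, ?_⟩
  · -- ValidProfile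
    intro w
    by_cases h0 : w.val = 0
    · have hwv : w = v := by rw [Fin.ext_iff, hvval]; omega
      rw [hwv, hSv, hmemX, hvval]
      omega
    · by_cases h1 : w.val = 1
      · have hwu : w = u := by rw [Fin.ext_iff, huval]; omega
        rw [hwu, hSu, Finset.mem_insert, Finset.mem_singleton]
        rintro (h | h)
        · rw [Fin.ext_iff, huval, hvval] at h; omega
        · rw [Fin.ext_iff, huval, hyval] at h; omega
      · by_cases h2 : w.val = 2
        · have hwy : w = y := by rw [Fin.ext_iff, hyval]; omega
          rw [hwy, hSy, hmemX, hyval]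
          omega
        · rw [hSx w (by omega)]
          exact Finset.notMem_empty w
  · -- improvement by deleting all of X
    rw [hSv, Finset.sdiff_self]
    have hadj'_vu : (indGraph (Function.update (sProfB m) v (∅ : Finset (Fin (m+5))))).Adj v u := by
      rw [indGraph_update_adj]
      exact ⟨hvu, Or.inr (Or.inr (Or.inl ⟨Ne.symm hvu, by rw [hSu]; exact Finset.mem_insert_self v {y}⟩))⟩
    have hadj'_uy : (indGraph (Function.update (sProfB m) v (∅ : Finset (Fin (m+5))))).Adj u y := by
      rw [indGraph_update_adj]
      exact ⟨huy, Or.inr (Or.inr (Or.inr ⟨hvu.symm, by rw [hSu]; exact Finset.mem_insert_of_mem (Finset.mem_singleton_self y)⟩))⟩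
    have hadj'_yx : ∀ w : Fin (m+5), 3 ≤ w.val →
        (indGraph (Function.update (sProfB m) v (∅ : Finset (Fin (m+5))))).Adj y w := by
      intro w hw
      rw [indGraph_update_adj]
      refine ⟨by rw [Fin.ne_iff_vne, hyval]; omega, Or.inr (Or.inr (Or.inr ⟨hvy.symm, ?_⟩))⟩
      rw [hSy]
      exact (hmemX w).mpr hw
    have hreach' : ∀ w, (indGraph (Function.update (sProfB m) v (∅ : Finset (Fin (m+5))))).Reachable v w := by
      intro w
      by_cases h0 : w.val = 0
      · have hwv : w = v := by rw [Fin.ext_iff, hvval]; omega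
        rw [hwv]
      · by_cases h1 : w.val = 1
        · have hwu : w = u := by rw [Fin.ext_iff, huval]; omega
          rw [hwu]; exact hadj'_vu.reachable
        · by_cases h2 : w.val = 2
          · have hwy : w = y := by rw [Fin.ext_iff, hyval]; omega
            rw [hwy]; exact (hadj'_vu.reachable).trans hadj'_uy.reachable
          · exact ((hadj'_vu.reachable).trans hadj'_uy.reachable).trans
              (hadj'_yx w (by omega)).reachable
    have hconn' := aux_connected v hreach'
    have hnadj'_vc : ∀ c, (indGraph (Function.update (sProfB m) v (∅ : Finset (Fin (m+5))))).Adj v c → c = u := by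
      intro c hc
      rw [indGraph_update_adj] at hc
      obtain ⟨hne, ⟨hcv, -⟩ | ⟨-, hmem⟩ | ⟨-, hmem⟩ | ⟨hvv, -⟩⟩ := hc
      · exact absurd hcv.symm hne
      · exact absurd hmem (Finset.notMem_empty c)
      · exact hvmem c hmem
      · exact absurd rfl hvv
    have hMD' : maxDist (Function.update (sProfB m) v (∅ : Finset (Fin (m+5)))) v = 3 := by
      obtain ⟨z, hz3v⟩ : ∃ z : Fin (m+5), (z:ℕ) = 3 := ⟨⟨3, by omega⟩, rfl⟩
      refine le_antisymm (aux_maxDist_le fun w => ?_) (aux_le_maxDist z ?_)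
      · by_cases h0 : w.val = 0
        · have hwv : w = v := by rw [Fin.ext_iff, hvval]; omega
          rw [hwv, SimpleGraph.dist_self]; omega
        · by_cases h1 : w.val = 1
          · have hwu : w = u := by rw [Fin.ext_iff, huval]; omega
            rw [hwu]
            exact le_trans (aux_dist_le_one hadj'_vu) (by omega)
          · by_cases h2 : w.val = 2
            · have hwy : w = y := by rw [Fin.ext_iff, hyval]; omega
              rw [hwy]
              exact le_trans (aux_dist_le_two hadj'_vu hadj'_uy) (by omega)
            · exact aux_dist_le_three hadj'_vu hadj'_uy (hadj'_yx w (by omega))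
      · refine aux_three_le_dist (hreach' z) (by rw [Fin.ne_iff_vne, hvval]; omega) ?_ ?_
        · intro hadj
          have h := hnadj'_vc _ hadj
          rw [Fin.ext_iff, huval] at h
          omega
        · intro c hcadj hadjc
          have hcu := hnadj'_vc _ hcadj
          subst hcu
          rw [indGraph_update_adj] at hadjc
          obtain ⟨hne, ⟨hxv, -⟩ | ⟨hcv, -⟩ | ⟨-, hmem⟩ | ⟨-, hmem⟩⟩ := hadjc
          · rw [Fin.ext_iff, hvval] at hxv; omega
          · rw [Fin.ext_iff, huval, hvval] at hcv; omega
          · rw [hSx z (by omega)] at hmem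
            exact absurd hmem (Finset.notMem_empty _)
          · rw [hSu, Finset.mem_insert, Finset.mem_singleton] at hmem
            rcases hmem with h | h
            · rw [Fin.ext_iff, hvval] at h; omega
            · rw [Fin.ext_iff, hyval] at h; omega
    apply aux_lt_cost hconn' hconn
    rw [hMD', hMD, Function.update_self, hSv, hXcard, Finset.card_empty]
    have key : (1:ℝ) < α * ((m:ℝ) + 2) := by
      rw [hαdef, div_mul_eq_mul_div, lt_div_iff₀ hden]
      nlinarith
    push_cast
    nlinarith [key]
  · -- no improvement by deleting fewer
    intro D' hD' h1 h2
    rw [hSv] at hD'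
    obtain ⟨z, hz⟩ := Finset.card_pos.mp (by omega : 0 < D'.card)
    have hz3 : 3 ≤ (z:ℕ) := (hmemX z).mp (hD' hz)
    apply aux_not_lt_cost hcost_old
    intro hc
    have hsub : D' ⊆ sProfB m v := by rw [hSv]; exact hD'
    have hcardT : ((Function.update (sProfB m) v (sProfB m v \ D')) v).card
        = (m+2) - D'.card := by
      rw [Function.update_self, Finset.card_sdiff_of_subset hsub, hSv, hXcard]
    have hnadj' : ¬ (indGraph (Function.update (sProfB m) v (sProfB m v \ D'))).Adj v z := by
      rw [indGraph_update_adj]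
      rintro ⟨hne, ⟨hzv, -⟩ | ⟨-, hmem⟩ | ⟨-, hmem⟩ | ⟨hvv, -⟩⟩
      · rw [Fin.ext_iff, hvval] at hzv; omega
      · exact (Finset.mem_sdiff.mp hmem).2 hz
      · have := hvmem z hmem
        rw [Fin.ext_iff, huval] at this; omega
      · exact hvv rfl
    have hmid : ∀ c, (indGraph (Function.update (sProfB m) v (sProfB m v \ D'))).Adj v c →
        ¬ (indGraph (Function.update (sProfB m) v (sProfB m v \ D'))).Adj c z := by
      intro c hcadj
      rw [indGraph_update_adj] at hcadj
      obtain ⟨hne, ⟨hcv, -⟩ | ⟨-, hmemc⟩ | ⟨-, hmemc⟩ | ⟨hvv, -⟩⟩ := hcadj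
      · exact absurd hcv.symm hne
      · have hc3 : 3 ≤ (c:ℕ) := by
          rw [hSv] at hmemc
          exact (hmemX c).mp (Finset.mem_sdiff.mp hmemc).1
        intro hadjc
        rw [indGraph_update_adj] at hadjc
        obtain ⟨hne2, ⟨hzv, -⟩ | ⟨hcv, -⟩ | ⟨-, hmem⟩ | ⟨-, hmem⟩⟩ := hadjc
        · rw [Fin.ext_iff, hvval] at hzv; omega
        · rw [Fin.ext_iff, hvval] at hcv; omega
        · rw [hSx z hz3] at hmem
          exact absurd hmem (Finset.notMem_empty c)
        · rw [hSx c hc3] at hmem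
          exact absurd hmem (Finset.notMem_empty z)
      · have hcu := hvmem c hmemc
        subst hcu
        intro hadjc
        rw [indGraph_update_adj] at hadjc
        obtain ⟨hne2, ⟨hzv, -⟩ | ⟨hcv, -⟩ | ⟨-, hmem⟩ | ⟨-, hmem⟩⟩ := hadjc
        · rw [Fin.ext_iff, hvval] at hzv; omega
        · rw [Fin.ext_iff, huval, hvval] at hcv; omega
        · rw [hSx z hz3] at hmem
          exact absurd hmem (Finset.notMem_empty _)
        · rw [hSu, Finset.mem_insert, Finset.mem_singleton] at hmem
          rcases hmem with h | h
          · rw [Fin.ext_iff, hvval] at h; omega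
          · rw [Fin.ext_iff, hyval] at h; omega
      · exact absurd rfl hvv
    have hd3 : 3 ≤ maxDist (Function.update (sProfB m) v (sProfB m v \ D')) v :=
      aux_le_maxDist z (aux_three_le_dist (hc.preconnected v z)
        (by rw [Fin.ne_iff_vne, hvval]; omega) hnadj' hmid)
    rw [hcardT]
    have hjle : (D'.card : ℝ) ≤ (m:ℝ) + 1 := by exact_mod_cast (by omega : D'.card ≤ m + 1)
    have hαj : α * (D'.card:ℝ) ≤ 1 := by
      rw [hαdef, div_mul_eq_mul_div, div_le_one hden]
      nlinarith
    have hd3' : (3:ℝ) ≤ (maxDist (Function.update (sProfB m) v (sProfB m v \ D')) v : ℝ) := by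
      exact_mod_cast hd3
    have hcast : (((m+2) - D'.card : ℕ) : ℝ) = ((m:ℝ)+2) - (D'.card:ℝ) := by
      rw [Nat.cast_sub (by omega : D'.card ≤ m + 2)]
      push_cast
      ring
    rw [hcast]
    have hexp : α * (((m:ℝ)+2) - (D'.card:ℝ)) = α*((m:ℝ)+2) - α*(D'.card:ℝ) := by ring
    rw [hexp]
    linarith [hαj, hd3']

private lemma scenC (m : ℕ) :
    ∃ (n : ℕ) (α : ℝ) (S : Fin n → Finset (Fin n)) (v : Fin n)
        (X Y : Finset (Fin n)),
      2 ≤ n ∧ 0 < α ∧ ValidProfile S ∧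
      X ⊆ S v ∧ (∀ y ∈ Y, y ≠ v ∧ y ∉ S v) ∧ X.card = m + 2 ∧ Y.card = m + 2 ∧
      maxCost α (Function.update S v ((S v \ X) ∪ Y)) v < maxCost α S v ∧
      (∀ X' Y' : Finset (Fin n), X' ⊆ S v → (∀ y ∈ Y', y ≠ v ∧ y ∉ S v) →
        X'.card = Y'.card → 1 ≤ X'.card → X'.card < m + 2 →
        ¬ maxCost α (Function.update S v ((S v \ X') ∪ Y')) v < maxCost α S v) := by
  classical
  set α : ℝ := 1 with hαdef
  have hα : (0:ℝ) < α := by rw [hαdef]; norm_num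
  set v : Fin (2*m+5) := ⟨0, by omega⟩ with hv
  set X : Finset (Fin (2*m+5)) := Finset.Icc ⟨1, by omega⟩ ⟨m+2, by omega⟩ with hX
  set F : Finset (Fin (2*m+5)) := Finset.Icc ⟨m+3, by omega⟩ ⟨2*m+4, by omega⟩ with hF
  have hvval : (v:ℕ) = 0 := rfl
  have hmemX : ∀ x : Fin (2*m+5), x ∈ X ↔ 1 ≤ (x:ℕ) ∧ (x:ℕ) ≤ m+2 := by
    intro x
    rw [hX, Finset.mem_Icc, Fin.le_def, Fin.le_def]
  have hmemF : ∀ x : Fin (2*m+5), x ∈ F ↔ m+3 ≤ (x:ℕ) := by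
    intro x
    have := x.isLt
    rw [hF, Finset.mem_Icc, Fin.le_def, Fin.le_def]
    simp only [Fin.val_mk]
    omega
  have hXcard : X.card = m + 2 := by
    rw [hX, Fin.card_Icc]
    simp only [Fin.val_mk]
    omega
  have hFcard : F.card = m + 2 := by
    rw [hF, Fin.card_Icc]
    simp only [Fin.val_mk]
    omega
  have hSv : sProfC m v = X := rfl
  have hSx : ∀ w : Fin (2*m+5), 1 ≤ (w:ℕ) → (w:ℕ) ≤ m+2 → sProfC m w = insert v F := by
    intro w h1 h2
    simp only [sProfC]
    rw [if_neg (by omega), if_pos (by omega)]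
  have hSf : ∀ w : Fin (2*m+5), m+3 ≤ (w:ℕ) → sProfC m w = ∅ := by
    intro w hw
    simp only [sProfC]
    rw [if_neg (by omega), if_neg (by omega)]
  have hadj_vx : ∀ x : Fin (2*m+5), x ∈ X → (indGraph (sProfC m)).Adj v x := by
    intro x hx
    have h1 := (hmemX x).mp hx
    exact ⟨by rw [Fin.ne_iff_vne, hvval]; omega, Or.inr (by rw [hSv]; exact hx)⟩
  have hadj_xf : ∀ x : Fin (2*m+5), x ∈ X → ∀ f : Fin (2*m+5), m+3 ≤ (f:ℕ) →
      (indGraph (sProfC m)).Adj x f := by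
    intro x hx f hf
    have h1 := (hmemX x).mp hx
    refine ⟨by rw [Fin.ne_iff_vne]; omega, Or.inr ?_⟩
    rw [hSx x h1.1 h1.2]
    exact Finset.mem_insert_of_mem ((hmemF f).mpr hf)
  have hnadj_vf : ∀ f : Fin (2*m+5), m+3 ≤ (f:ℕ) → ¬ (indGraph (sProfC m)).Adj v f := by
    intro f hf
    rintro ⟨-, h | h⟩
    · rw [hSf f hf] at h
      exact absurd h (Finset.notMem_empty v)
    · rw [hSv] at h
      have := (hmemX f).mp h
      omega
  obtain ⟨x1, hx1⟩ : ∃ z : Fin (2*m+5), (z:ℕ) = 1 := ⟨⟨1, by omega⟩, rfl⟩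
  have hx1X : x1 ∈ X := (hmemX x1).mpr (by omega)
  have hreach : ∀ w, (indGraph (sProfC m)).Reachable v w := by
    intro w
    by_cases h0 : (w:ℕ) = 0
    · have hwv : w = v := by rw [Fin.ext_iff, hvval]; omega
      rw [hwv]
    · by_cases hm : (w:ℕ) ≤ m+2
      · exact (hadj_vx w ((hmemX w).mpr (by omega))).reachable
      · exact ((hadj_vx x1 hx1X).reachable).trans (hadj_xf x1 hx1X w (by omega)).reachable
  have hconn : (indGraph (sProfC m)).Connected := aux_connected v hreach
  obtain ⟨z3, hz3⟩ : ∃ z : Fin (2*m+5), (z:ℕ) = m+3 := ⟨⟨m+3, by omega⟩, rfl⟩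
  have hMD : maxDist (sProfC m) v = 2 := by
    refine le_antisymm (aux_maxDist_le fun w => ?_) (aux_le_maxDist z3 ?_)
    · by_cases h0 : (w:ℕ) = 0
      · have hwv : w = v := by rw [Fin.ext_iff, hvval]; omega
        rw [hwv, SimpleGraph.dist_self]; omega
      · by_cases hm : (w:ℕ) ≤ m+2
        · exact le_trans (aux_dist_le_one (hadj_vx w ((hmemX w).mpr (by omega)))) (by omega)
        · exact aux_dist_le_two (hadj_vx x1 hx1X) (hadj_xf x1 hx1X w (by omega))
    · exact aux_two_le_dist (hreach z3) (by rw [Fin.ne_iff_vne, hvval]; omega)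
        (hnadj_vf z3 (by omega))
  have hcost_old : maxCost α (sProfC m) v = ((α * ((m:ℝ)+2) + 2 : ℝ) : EReal) := by
    rw [maxCost_eq_of_conn hconn, hMD, hSv, hXcard]
    norm_num
  refine ⟨2*m+5, α, sProfC m, v, X, F, by omega, hα, ?_, by rw [hSv], ?_, by rw [hXcard],
    by rw [hFcard], ?_, ?_⟩
  · -- ValidProfile
    intro w
    by_cases h0 : (w:ℕ) = 0
    · have hwv : w = v := by rw [Fin.ext_iff, hvval]; omega
      rw [hwv, hSv, hmemX, hvval]
      omega
    · by_cases hm : (w:ℕ) ≤ m+2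
      · rw [hSx w (by omega) hm, Finset.mem_insert]
        rintro (h | h)
        · rw [Fin.ext_iff, hvval] at h; omega
        · rw [hmemF] at h; omega
      · rw [hSf w (by omega)]
        exact Finset.notMem_empty w
  · -- properties of Y = F
    intro f hf
    have h3 := (hmemF f).mp hf
    constructor
    · rw [Fin.ne_iff_vne, hvval]; omega
    · rw [hSv, hmemX]; omega
  · -- improvement by the full swap
    rw [hSv, Finset.sdiff_self, Finset.empty_union]
    have hdomin : ∀ w, w ≠ v →
        (indGraph (Function.update (sProfC m) v F)).Adj v w := by
      intro w hw
      rw [indGraph_update_adj]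
      have h0 : (w:ℕ) ≠ 0 := by
        intro h
        exact hw (by rw [Fin.ext_iff, hvval]; omega)
      by_cases hm : (w:ℕ) ≤ m+2
      · refine ⟨Ne.symm hw, Or.inr (Or.inr (Or.inl ⟨hw, ?_⟩))⟩
        rw [hSx w (by omega) hm]
        exact Finset.mem_insert_self v F
      · exact ⟨Ne.symm hw, Or.inr (Or.inl ⟨rfl, (hmemF w).mpr (by omega)⟩)⟩
    have hconn' := aux_connected_of_dominating hdomin
    have hMD' := aux_maxDist_eq_one hdomin
      ⟨x1, by rw [Fin.ne_iff_vne, hvval]; omega⟩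
    apply aux_lt_cost hconn' hconn
    rw [hMD', hMD, Function.update_self, hFcard, hSv, hXcard]
    push_cast
    linarith
  · -- no improvement by a smaller swap
    intro X' Y' hX'sub hY' hcards h1 h2
    have hX'X : X' ⊆ X := by rw [hSv] at hX'sub; exact hX'sub
    have hY'F : Y' ⊆ F := by
      intro a ha
      obtain ⟨hav, haX⟩ := hY' a ha
      rw [hSv, hmemX] at haX
      have h0 : (a:ℕ) ≠ 0 := by
        intro h
        exact hav (by rw [Fin.ext_iff, hvval]; omega)
      exact (hmemF a).mpr (by omega)
    obtain ⟨f, hfF, hfY⟩ := aux_exists_not_mem (s := Y') (t := F)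
      (by rw [hFcard]; omega)
    have hf3 := (hmemF f).mp hfF
    apply aux_not_lt_cost hcost_old
    intro hc
    have hdisj : Disjoint (sProfC m v \ X') Y' := by
      rw [Finset.disjoint_left]
      intro a ha hay
      have h1a := (hmemX a).mp ((Finset.mem_sdiff.mp (by rwa [hSv] at ha)).1)
      have h2a := (hmemF a).mp (hY'F hay)
      omega
    have hcardT : ((Function.update (sProfC m) v ((sProfC m v \ X') ∪ Y')) v).card
        = m + 2 := by
      rw [Function.update_self, Finset.card_union_of_disjoint hdisj,
        Finset.card_sdiff_of_subset hX'sub, hSv, hXcard]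
      have := Finset.card_le_card hX'X
      rw [hXcard] at this
      omega
    have hnadj' : ¬ (indGraph (Function.update (sProfC m) v
        ((sProfC m v \ X') ∪ Y'))).Adj v f := by
      rw [indGraph_update_adj]
      rintro ⟨hne, ⟨hfv, -⟩ | ⟨-, hmem⟩ | ⟨-, hmem⟩ | ⟨hvv, -⟩⟩
      · rw [Fin.ext_iff, hvval] at hfv; omega
      · rcases Finset.mem_union.mp hmem with h | h
        · have := (hmemX f).mp ((Finset.mem_sdiff.mp (by rwa [hSv] at h)).1)
          omega
        · exact hfY h
      · rw [hSf f hf3] at hmem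
        exact absurd hmem (Finset.notMem_empty v)
      · exact hvv rfl
    have hd2 : 2 ≤ maxDist (Function.update (sProfC m) v ((sProfC m v \ X') ∪ Y')) v :=
      aux_le_maxDist f (aux_two_le_dist (hc.preconnected v f)
        (by rw [Fin.ne_iff_vne, hvval]; omega) hnadj')
    rw [hcardT]
    have hd2' : (2:ℝ) ≤
        (maxDist (Function.update (sProfC m) v ((sProfC m v \ X') ∪ Y')) v : ℝ) := by
      exact_mod_cast hd2
    push_cast
    linarith


/-- For every `k ≥ 2`, in the Max version there are (i) a profile and an
agent who profits from buying `k` edges simultaneously but not from buying any `j < k`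
new edges; (ii) a profile and an agent who profits from deleting `k` own edges but not
from deleting any `j < k` of them; (iii) a profile and an agent who profits from a
`k`-edge multi-swap but not from any `j < k`-edge multi-swap. -/
theorem max_nonlocal_improvements (k : ℕ) (hk : 2 ≤ k) :
    (∃ (n : ℕ) (α : ℝ) (S : Fin n → Finset (Fin n)) (v : Fin n) (W : Finset (Fin n)),
      2 ≤ n ∧ 0 < α ∧ ValidProfile S ∧
      W.card = k ∧ (∀ x ∈ W, x ≠ v ∧ x ∉ S v) ∧
      maxCost α (Function.update S v (S v ∪ W)) v < maxCost α S v ∧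
      (∀ W' : Finset (Fin n), (∀ x ∈ W', x ≠ v ∧ x ∉ S v) →
        1 ≤ W'.card → W'.card < k →
        ¬ maxCost α (Function.update S v (S v ∪ W')) v < maxCost α S v)) ∧
    (∃ (n : ℕ) (α : ℝ) (S : Fin n → Finset (Fin n)) (v : Fin n) (D : Finset (Fin n)),
      2 ≤ n ∧ 0 < α ∧ ValidProfile S ∧
      D ⊆ S v ∧ D.card = k ∧
      maxCost α (Function.update S v (S v \ D)) v < maxCost α S v ∧
      (∀ D' : Finset (Fin n), D' ⊆ S v → 1 ≤ D'.card → D'.card < k →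
        ¬ maxCost α (Function.update S v (S v \ D')) v < maxCost α S v)) ∧
    (∃ (n : ℕ) (α : ℝ) (S : Fin n → Finset (Fin n)) (v : Fin n)
        (X Y : Finset (Fin n)),
      2 ≤ n ∧ 0 < α ∧ ValidProfile S ∧
      X ⊆ S v ∧ (∀ y ∈ Y, y ≠ v ∧ y ∉ S v) ∧ X.card = k ∧ Y.card = k ∧
      maxCost α (Function.update S v ((S v \ X) ∪ Y)) v < maxCost α S v ∧
      (∀ X' Y' : Finset (Fin n), X' ⊆ S v → (∀ y ∈ Y', y ≠ v ∧ y ∉ S v) →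
        X'.card = Y'.card → 1 ≤ X'.card → X'.card < k →
        ¬ maxCost α (Function.update S v ((S v \ X') ∪ Y')) v < maxCost α S v)) := by
  
  obtain ⟨m, rfl⟩ : ∃ m, k = m + 2 := ⟨k - 2, by omega⟩
  exact ⟨scenA m, scenB m, scenC m⟩
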